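/- arXiv:1904.06287 — 3 statements merged into one kernel-verified Lean document; each statement's English description precedes it below -/
import Mathlib

section
/- Let (S, d) be a metric space of strategies, S_ad ⊆ S, J : S_ad → ℝ Lipschitz with constant L_J, I : S_ad → [0,∞), Ω(0) = {φ ∈ S_ad : I(φ) = 0} nonempty, and suppose I(φ) ≥ L_I · dist(φ, Ω(0)) for some L_I > 0 and all φ ∈ S_ad. Suppose moreover that for every φ ∉ Ω(0) the distance dist(φ, Ω(0)) is attained by some φ₁ ∈ Ω(0). Then for any q ≥ L_J / L_I and all φ ∈ S_ad: J_o − J(φ) ≤ q · I(φ), where J_o = inf_{ψ∈Ω(0)} J(ψ). -/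
open Metric

/-- Theorem 1 of the paper: if `J` is Lipschitz with constant `L_J` on `S_ad`,
`I φ ≥ L_I · dist(φ, Ω(0))`, `Ω(0) = {φ ∈ S_ad : I φ = 0}` is nonempty, `J` is bounded
below on `Ω(0)`, and the distance to `Ω(0)` is attained for every `φ ∉ Ω(0)`,
then for every `q ≥ L_J / L_I` and all `φ ∈ S_ad`: `Jo - J φ ≤ q · I φ`. -/
theorem stmt_2 {S : Type*} [MetricSpace S] (Sad : Set S)
    (J : S → ℝ) (I : S → ℝ) (LJ LI : ℝ) (hLJ : 0 < LJ) (hLI : 0 < LI)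
    (hLip : ∀ φ ∈ Sad, ∀ φ₁ ∈ Sad, |J φ - J φ₁| ≤ LJ * dist φ φ₁)
    (hInonneg : ∀ φ ∈ Sad, 0 ≤ I φ)
    (Ω0 : Set S) (hΩ0def : Ω0 = {φ ∈ Sad | I φ = 0})
    (hΩ0ne : Ω0.Nonempty)
    (hJbdd : BddBelow (J '' Ω0))
    (hI : ∀ φ ∈ Sad, LI * infDist φ Ω0 ≤ I φ)
    (hattain : ∀ φ ∈ Sad, φ ∉ Ω0 → ∃ φ₁ ∈ Ω0, dist φ₁ φ = infDist φ Ω0)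
    (Jo : ℝ) (hJo : Jo = sInf (J '' Ω0)) :
    ∀ q : ℝ, LJ / LI ≤ q → ∀ φ ∈ Sad, Jo - J φ ≤ q * I φ := by
  intro q hq φ hφ
  by_cases hmem : φ ∈ Ω0
  · have hI0 : I φ = 0 := by rw [hΩ0def] at hmem; exact hmem.2
    have hle : Jo ≤ J φ := hJo ▸ csInf_le hJbdd ⟨φ, hmem, rfl⟩
    simp [hI0]; linarith
  · obtain ⟨φ₁, hφ₁, hd⟩ := hattain φ hφ hmem
    have hφ₁ad : φ₁ ∈ Sad := by rw [hΩ0def] at hφ₁; exact hφ₁.1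
    have hle : Jo ≤ J φ₁ := hJo ▸ csInf_le hJbdd ⟨φ₁, hφ₁, rfl⟩
    have h1 : J φ₁ - J φ ≤ LJ * infDist φ Ω0 := by
      have := hLip φ₁ hφ₁ad φ hφ
      rw [hd] at this
      exact (abs_le.mp this).2
    have h2 : LI * infDist φ Ω0 ≤ I φ := hI φ hφ
    have hdn : 0 ≤ infDist φ Ω0 := infDist_nonneg
    have hIn : 0 ≤ I φ := hInonneg φ hφ
    have h3 : LJ * infDist φ Ω0 ≤ q * I φ := by
      calc LJ * infDist φ Ω0 = (LJ / LI) * (LI * infDist φ Ω0) := by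
            field_simp
        _ ≤ q * (LI * infDist φ Ω0) := by
            apply mul_le_mul_of_nonneg_right hq (by positivity)
        _ ≤ q * I φ := by
            apply mul_le_mul_of_nonneg_left h2 (le_trans (div_nonneg hLJ.le hLI.le) hq)
    linarith
end

section
/- Under the assumptions of Theorem 1 (Lipschitz J with constant L_J, I(φ) ≥ L_I · dist(φ,Ω(0)), distance to Ω(0) attained), for any φ ∉ Ω(0) and q ≥ L_J/L_I one has J(φ) + q·I(φ) ≥ J_o. -/
open Metric

/-- Theorem 1 of the paper: if `J` is Lipschitz with constant `L_J` on `S_ad`,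
`I φ ≥ L_I · dist(φ, Ω(0))`, `Ω(0) = {φ ∈ S_ad : I φ = 0}` is nonempty, `J` is bounded
below on `Ω(0)`, and the distance to `Ω(0)` is attained for every `φ ∉ Ω(0)`,
then for every `q ≥ L_J / L_I` and all `φ ∈ S_ad` with `φ ∉ Ω(0)`: `J φ + q · I φ ≥ Jo`. -/
theorem stmt_3 {S : Type*} [MetricSpace S] (Sad : Set S)
    (J : S → ℝ) (I : S → ℝ) (LJ LI : ℝ) (hLJ : 0 < LJ) (hLI : 0 < LI)
    (hLip : ∀ φ ∈ Sad, ∀ φ₁ ∈ Sad, |J φ - J φ₁| ≤ LJ * dist φ φ₁)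
    (hInonneg : ∀ φ ∈ Sad, 0 ≤ I φ)
    (Ω0 : Set S) (hΩ0def : Ω0 = {φ ∈ Sad | I φ = 0})
    (hΩ0ne : Ω0.Nonempty)
    (hJbdd : BddBelow (J '' Ω0))
    (hI : ∀ φ ∈ Sad, LI * infDist φ Ω0 ≤ I φ)
    (hattain : ∀ φ ∈ Sad, φ ∉ Ω0 → ∃ φ₁ ∈ Ω0, dist φ₁ φ = infDist φ Ω0)
    (Jo : ℝ) (hJo : Jo = sInf (J '' Ω0)) :
    ∀ q : ℝ, LJ / LI ≤ q → ∀ φ ∈ Sad, φ ∉ Ω0 → Jo ≤ J φ + q * I φ := by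
  intro q hq φ hφ hφn
  obtain ⟨φ₁, hφ₁Ω, hd⟩ := hattain φ hφ hφn
  have hφ₁S : φ₁ ∈ Sad := by rw [hΩ0def] at hφ₁Ω; exact hφ₁Ω.1
  have hJo : Jo ≤ J φ₁ := by
    rw [hJo]; exact csInf_le hJbdd ⟨φ₁, hφ₁Ω, rfl⟩
  have h1 : J φ₁ - J φ ≤ LJ * dist φ φ₁ := by
    have := hLip φ hφ φ₁ hφ₁S
    have := abs_le.mp this
    linarith [this.1]
  have h2 : dist φ φ₁ = infDist φ Ω0 := by rw [dist_comm]; exact hd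
  have h3 : LJ * infDist φ Ω0 ≤ q * I φ := by
    have hIphi := hI φ hφ
    have hIn := hInonneg φ hφ
    have hdn : 0 ≤ infDist φ Ω0 := infDist_nonneg
    have : LJ / LI * (LI * infDist φ Ω0) ≤ q * I φ := by
      apply mul_le_mul hq hIphi (by positivity) (le_trans (le_of_lt (div_pos hLJ hLI)) hq)
    calc LJ * infDist φ Ω0 = LJ / LI * (LI * infDist φ Ω0) := by field_simp
      _ ≤ q * I φ := this
  linarith [h1, h2 ▸ h1]
end

section
/- Let x₁ be an ℝⁿ-valued random vector (depending on a strategy φ) with differential entropy H(φ), covariance S, and suppose L(x₁) ≥ c|x₁|² for some c > 0. Then E[L(x₁)] ≥ c·n·(2πe)^{−1}·e^{2H(φ)/n}. Consequently, if additionally H(φ) ≥ H_o − I(φ) (the Touchette–Lloyd inequality), then E[L(x₁)] ≥ c·n·(2πe)^{−1}·e^{2(H_o − I(φ))/n}. -/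
open MeasureTheory Real

/-- Theorem 2 of the paper (one-step information bound for quadratic-dominated cost):
if the final state `x₁` has density `p` on `ℝⁿ` with differential entropy `H`, and
`L(z) ≥ c |z|²` with `c > 0`, then `E[L(x₁)] ≥ c n (2πe)⁻¹ e^{2H/n}`; consequently,
whenever the Touchette–Lloyd inequality `H ≥ H_o − I` holds,
`E[L(x₁)] ≥ c n (2πe)⁻¹ e^{2(H_o − I)/n}`. -/
theorem stmt_6 (n : ℕ) (hn : 0 < n)
    (p : (Fin n → ℝ) → ℝ)
    (hp_nonneg : ∀ x, 0 ≤ p x)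
    (hp_meas : Measurable p)
    (hp_int : ∫ x, p x = 1)
    (hp_mom2 : ∀ i j, Integrable (fun x => x i * x j * p x))
    (H : ℝ)
    (hH_int : Integrable (fun x => p x * log (p x)))
    (hH : H = -∫ x, p x * log (p x))
    (L : (Fin n → ℝ) → ℝ) (c : ℝ) (hc : 0 < c)
    (hL : ∀ z, c * (∑ i, (z i) ^ 2) ≤ L z)
    (hL_int : Integrable (fun x => L x * p x))
    (EL : ℝ) (hEL : EL = ∫ x, L x * p x) :
    c * n * (2 * π * exp 1)⁻¹ * exp (2 * H / n) ≤ EL ∧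
    (∀ Ho I : ℝ, Ho - H ≤ I →
      c * n * (2 * π * exp 1)⁻¹ * exp (2 * (Ho - I) / n) ≤ EL) := by
  haveI : Nonempty (Fin n) := ⟨⟨0, hn⟩⟩
  have hn' : (0:ℝ) < n := Nat.cast_pos.mpr hn
  -- p is integrable
  have h_p_int : Integrable p := by
    by_contra h
    rw [integral_undef h] at hp_int
    exact one_ne_zero hp_int.symm
  -- the second moment function
  set q : (Fin n → ℝ) → ℝ := fun x => (∑ i, (x i) ^ 2) * p x with hq_def
  have hq_int : Integrable q := by
    have : q = fun x => ∑ i, x i * x i * p x := by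
      funext x; simp [hq_def, Finset.sum_mul, sq]
    rw [this]
    exact integrable_finset_sum _ fun i _ => hp_mom2 i i
  have hq_nonneg : ∀ x, 0 ≤ q x := fun x =>
    mul_nonneg (Finset.sum_nonneg fun i _ => sq_nonneg _) (hp_nonneg x)
  set S : ℝ := ∫ x, q x with hS_def
  have hS0 : 0 ≤ S := integral_nonneg hq_nonneg
  -- S > 0
  have hS_pos : 0 < S := by
    rcases hS0.lt_or_eq with h | h
    · exact h
    · exfalso
      have hq0 : ∀ᵐ x : Fin n → ℝ, q x = 0 := by
        have := (integral_eq_zero_iff_of_nonneg hq_nonneg hq_int).mp h.symm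
        filter_upwards [this] with x hx using hx
      have h0 : ∀ᵐ x : Fin n → ℝ, x ≠ 0 := by
        have hsing : (volume : Measure (Fin n → ℝ)) {(0 : Fin n → ℝ)} = 0 :=
          measure_singleton 0
        rw [ae_iff]
        convert hsing using 2
        ext x; simp
      have hp0 : p =ᵐ[volume] 0 := by
        filter_upwards [hq0, h0] with x hqx hx
        by_contra hpx
        have hsum : (∑ i, (x i) ^ 2) = 0 := by
          rcases mul_eq_zero.mp hqx with h | h
          · exact h
          · exact absurd h hpx
        clear hqx
        have : x = 0 := by
          funext i
          have := (Finset.sum_eq_zero_iff_of_nonneg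
            (fun i _ => sq_nonneg (x i))).mp hsum i (Finset.mem_univ i)
          exact pow_eq_zero_iff two_ne_zero |>.mp this
        exact hx this
      rw [integral_congr_ae hp0] at hp_int
      simp at hp_int
  set s : ℝ := S / n with hs_def
  have hs : 0 < s := div_pos hS_pos hn'
  set b : ℝ := (2 * s)⁻¹ with hb_def
  have hb : 0 < b := by positivity
  set K : ℝ := (√(π / b)) ^ n with hK_def
  have hK : 0 < K := pow_pos (Real.sqrt_pos.mpr (div_pos pi_pos hb)) n
  set g : (Fin n → ℝ) → ℝ := fun x => K⁻¹ * exp (-b * ∑ i, (x i) ^ 2) with hg_def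
  have hg_pos : ∀ x, 0 < g x := fun x => mul_pos (inv_pos.mpr hK) (exp_pos _)
  have hprod : ∀ x : Fin n → ℝ, exp (-b * ∑ i, (x i) ^ 2) = ∏ i, exp (-b * (x i) ^ 2) := by
    intro x
    rw [Finset.mul_sum, exp_sum]
  have hexp_int : Integrable (fun x : Fin n → ℝ => exp (-b * ∑ i, (x i) ^ 2)) := by
    have := Integrable.fintype_prod (f := fun (_ : Fin n) (v : ℝ) => exp (-b * v ^ 2))
      (fun _ => integrable_exp_neg_mul_sq hb)
    exact this.congr (Filter.Eventually.of_forall fun x => (hprod x).symm)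
  have hg_int : Integrable g := hexp_int.const_mul _
  have hg_intgl : ∫ x, g x = 1 := by
    rw [hg_def]
    simp only
    rw [integral_const_mul _ _]
    have : ∫ x : Fin n → ℝ, exp (-b * ∑ i, (x i) ^ 2)
        = (∫ v : ℝ, exp (-b * v ^ 2)) ^ n := by
      rw [integral_congr_ae (Filter.Eventually.of_forall hprod)]
      have hpow := MeasureTheory.integral_fintype_prod_eq_pow (𝕜 := ℝ) (ι := Fin n)
        (fun v : ℝ => exp (-b * v ^ 2)) (μ := volume)
      rw [Fintype.card_fin] at hpow
      exact hpow
    rw [this, integral_gaussian, ← hK_def, inv_mul_cancel₀ hK.ne']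
  -- log of g
  have hlogg : ∀ x, log (g x) = -log K + (-b * ∑ i, (x i) ^ 2) := by
    intro x
    rw [hg_def]
    simp only
    rw [log_mul (inv_ne_zero hK.ne') (exp_ne_zero _), log_inv, log_exp]
  -- integrability of p * log g
  have hplg_int : Integrable (fun x => p x * log (g x)) := by
    have heq : (fun x => p x * log (g x)) = fun x => (-log K) * p x - b * q x := by
      funext x
      rw [hlogg x, hq_def]
      ring
    rw [heq]
    exact (h_p_int.const_mul _).sub (hq_int.const_mul _)
  have hplg_val : ∫ x, p x * log (g x) = -log K - b * S := by
    have heq : (fun x => p x * log (g x)) = fun x => (-log K) * p x - b * q x := by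
      funext x
      rw [hlogg x, hq_def]
      ring
    rw [heq, integral_sub (h_p_int.const_mul _) (hq_int.const_mul _),
      integral_const_mul _ _, integral_const_mul _ _, hp_int, ← hS_def]
    ring
  -- Gibbs pointwise inequality
  have hpoint : ∀ x, p x - g x ≤ p x * log (p x) - p x * log (g x) := by
    intro x
    rcases (hp_nonneg x).lt_or_eq with hpx | hpx
    · have hgx := hg_pos x
      have h1 : 1 - (p x / g x)⁻¹ ≤ log (p x / g x) :=
        one_sub_inv_le_log_of_pos (div_pos hpx hgx)
      have h2 := mul_le_mul_of_nonneg_left h1 hpx.le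
      rw [log_div hpx.ne' hgx.ne'] at h2
      have h3 : p x * (1 - (p x / g x)⁻¹) = p x - g x := by
        field_simp
      rw [h3] at h2
      linarith [h2]
    · rw [← hpx]
      calc (0:ℝ) - g x ≤ 0 := by linarith [hg_pos x]
        _ = 0 * log 0 - 0 * log (g x) := by ring
  -- integrate
  have hgibbs : (0:ℝ) ≤ ∫ x, (p x * log (p x) - p x * log (g x)) := by
    have := integral_mono (h_p_int.sub hg_int) (hH_int.sub hplg_int)
      (fun x => hpoint x)
    simp only [Pi.sub_apply] at this
    rwa [integral_sub h_p_int hg_int, hp_int, hg_intgl, sub_self] at this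
  have hEnt : -∫ x, p x * log (p x) ≤ log K + b * S := by
    rw [integral_sub hH_int hplg_int, hplg_val] at hgibbs
    linarith
  have hH_le : H ≤ log K + b * S := by rw [hH]; exact hEnt
  -- compute log K + b * S
  have hbS : b * S = n / 2 := by
    rw [hb_def, hs_def]
    field_simp
  have hlogK : log K = (n / 2) * log (2 * π * s) := by
    rw [hK_def, log_pow, log_sqrt (div_nonneg pi_pos.le hb.le)]
    have : π / b = 2 * π * s := by
      rw [hb_def]
      field_simp
    rw [this]
    ring
  have h2pis : 0 < 2 * π * s := by positivity
  -- exp(2H/n) ≤ 2π s e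
  have hexp_bound : exp (2 * H / n) ≤ 2 * π * s * exp 1 := by
    have h1 : 2 * H / n ≤ log (2 * π * s) + 1 := by
      rw [div_le_iff₀ hn']
      have := hH_le
      rw [hbS, hlogK] at this
      nlinarith
    calc exp (2 * H / n) ≤ exp (log (2 * π * s) + 1) := exp_le_exp.mpr h1
      _ = 2 * π * s * exp 1 := by rw [exp_add, exp_log h2pis]
  -- EL ≥ c * S
  have hEL_ge : c * S ≤ EL := by
    have hmono : ∫ x, c * q x ≤ ∫ x, L x * p x := by
      refine integral_mono (hq_int.const_mul c) hL_int fun x => ?_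
      have := mul_le_mul_of_nonneg_right (hL x) (hp_nonneg x)
      calc c * q x = c * (∑ i, (x i) ^ 2) * p x := by rw [hq_def]; ring
        _ ≤ L x * p x := this
    rw [hEL, ← integral_const_mul _ _]
    exact hmono
  have hmain : c * n * (2 * π * exp 1)⁻¹ * exp (2 * H / n) ≤ EL := by
    have h1 : c * n * (2 * π * exp 1)⁻¹ * exp (2 * H / n)
        ≤ c * n * (2 * π * exp 1)⁻¹ * (2 * π * s * exp 1) := by
      apply mul_le_mul_of_nonneg_left hexp_bound
      positivity
    have h2 : c * n * (2 * π * exp 1)⁻¹ * (2 * π * s * exp 1) = c * S := by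
      rw [hs_def]
      field_simp
    calc c * n * (2 * π * exp 1)⁻¹ * exp (2 * H / n)
        ≤ c * S := by rw [← h2]; exact h1
      _ ≤ EL := hEL_ge
  refine ⟨hmain, fun Ho I hHo => ?_⟩
  have h1 : Ho - I ≤ H := by linarith
  have h2 : exp (2 * (Ho - I) / n) ≤ exp (2 * H / n) := by
    apply exp_le_exp.mpr
    gcongr
  calc c * n * (2 * π * exp 1)⁻¹ * exp (2 * (Ho - I) / n)
      ≤ c * n * (2 * π * exp 1)⁻¹ * exp (2 * H / n) := by
        apply mul_le_mul_of_nonneg_left h2; positivity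
    _ ≤ EL := hmain
end
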